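/- Let R' be a fixed lattice in K^{n-1} ⊂ K^n. The number of lattices R in K^n with R ∩ K^{n-1} = R', with projection-valuation ξ(R) = ξ and invariant ν(R) = ν equals 1/vol(R' ∩ O^{n-1}) if ν = 0, and p^{ν(n-1)}(1 − p^{-(n-1)})/vol(R' ∩ O^{n-1}) if ν > 0; in particular it does not depend on ξ. -/

import Mathlib

/-!
Write `M ⊆ ℚ_p^m` for `R'` read in the first `m` coordinates and `N = M + ℤ_p^m`. Two vectors
`v, w ∈ K^m` give the same lattice `R' + ℤ_p (p^ξ e_n + v)` iff `v - w ∈ R'`, so the lattices are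
counted by classes `x ∈ ℚ_p^m / M`, and `ν ≤ k` means `p^k x ∈ N / M`. There are
`[N : M] p^{km}` such classes, because `[L : p^k L] = p^{km}` for every lattice `L`; and
`[N : M] = [ℤ_p^m : M ∩ ℤ_p^m] = 1 / vol(M ∩ ℤ_p^m)`, since the translates of the open subgroup
`M ∩ ℤ_p^m` tile `ℤ_p^m`. The count for `ν > 0` is the difference of the counts for `ν` and `ν - 1`.
-/

open MeasureTheory

noncomputable section

instance (p : ℕ) [Fact p.Prime] : MeasurableSpace ℚ_[p] := borel _

/-- The standard lattice `ℤ_p^n ⊂ ℚ_p^n`. -/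
def stdLat (p n : ℕ) [Fact p.Prime] : Submodule ℤ_[p] (Fin n → ℚ_[p]) :=
  Submodule.pi Set.univ fun _ => 1

/-- A lattice in `ℚ_p^n` is a compact open `ℤ_p`-submodule. -/
def IsLattice {p n : ℕ} [Fact p.Prime] (R : Submodule ℤ_[p] (Fin n → ℚ_[p])) : Prop :=
  IsCompact (R : Set (Fin n → ℚ_[p])) ∧ IsOpen (R : Set (Fin n → ℚ_[p]))

/-- The coordinate hyperplane `K^{n-1} = {x : x_{last} = 0}` inside `ℚ_p^{m+1}`,
viewed as a `ℤ_p`-submodule. -/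
def Kpred (p m : ℕ) [Fact p.Prime] : Submodule ℤ_[p] (Fin (m + 1) → ℚ_[p]) :=
  LinearMap.ker ((LinearMap.proj (Fin.last m) :
    (Fin (m + 1) → ℚ_[p]) →ₗ[ℤ_[p]] ℚ_[p]))

/-- `R'` is a lattice in the subspace `W`: it is contained in `W`, compact, and open
in the subspace topology of `W`. -/
def IsLatticeWithin {p n : ℕ} [Fact p.Prime] (W R' : Submodule ℤ_[p] (Fin n → ℚ_[p])) : Prop :=
  R' ≤ W ∧ IsCompact (R' : Set (Fin n → ℚ_[p])) ∧
    IsOpen (Subtype.val ⁻¹' (R' : Set (Fin n → ℚ_[p])) : Set W)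

/-- The vector `p^ξ e_n + v`. -/
def genVec (p m : ℕ) [Fact p.Prime] (ξ : ℤ) (v : Fin (m + 1) → ℚ_[p]) :
    Fin (m + 1) → ℚ_[p] :=
  Pi.single (Fin.last m) ((p : ℚ_[p]) ^ ξ) + v

/-- The subset of `ℚ_p^j = K^j` corresponding to `A ∩ K^j`, where `K^j ⊆ ℚ_p^n` is the
span of the first `j` standard basis vectors. -/
def restrictSet (p : ℕ) [Fact p.Prime] {n : ℕ} (j : ℕ) (A : Set (Fin n → ℚ_[p])) :
    Set (Fin j → ℚ_[p]) :=
  {y | (fun i : Fin n => if h : (i : ℕ) < j then y ⟨i, h⟩ else 0) ∈ A}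

open scoped Pointwise

instance (p : ℕ) [Fact p.Prime] : BorelSpace ℚ_[p] := ⟨rfl⟩

namespace AddSubgroup

variable {G : Type*} [AddGroup G]

theorem relIndex_map_self_eq_of_le {f : G →+ G} (hf : Function.Injective f) {Z X : AddSubgroup G}
    (hZX : Z ≤ X) (hX : X.map f ≤ X) (hZ : Z.map f ≤ Z) (h : Z.relIndex X ≠ 0) :
    (X.map f).relIndex X = (Z.map f).relIndex Z := by
  have via_X : (Z.map f).relIndex X = Z.relIndex X * (X.map f).relIndex X := by
    rw [← relIndex_map_map_of_injective Z X hf, relIndex_mul_relIndex _ _ _ (map_mono hZX) hX]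
  have via_Z : (Z.map f).relIndex X = (Z.map f).relIndex Z * Z.relIndex X :=
    (relIndex_mul_relIndex _ _ _ hZ hZX).symm
  exact Nat.eq_of_mul_eq_mul_left (Nat.pos_of_ne_zero h) (by rw [← via_X, via_Z, mul_comm])

variable [TopologicalSpace G] [IsTopologicalAddGroup G]

theorem finite_quotient_addSubgroupOf_of_isCompact_of_isOpen {H K : AddSubgroup G}
    (hK : IsCompact (K : Set G)) (hH : IsOpen (H : Set G)) : Finite (K ⧸ H.addSubgroupOf K) :=
  have : CompactSpace K := isCompact_iff_compactSpace.mp hK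
  quotient_finite_of_isOpen _ (hH.preimage continuous_subtype_val)

theorem relIndex_ne_zero_of_isCompact_of_isOpen {H K : AddSubgroup G}
    (hK : IsCompact (K : Set G)) (hH : IsOpen (H : Set G)) : H.relIndex K ≠ 0 :=
  have := finite_quotient_addSubgroupOf_of_isCompact_of_isOpen hK hH
  index_ne_zero_of_finite

theorem relIndex_mul_measure [MeasurableSpace G] [BorelSpace G] (μ : Measure G)
    [μ.IsAddLeftInvariant] {H K : AddSubgroup G} (hHK : H ≤ K) (hK : IsCompact (K : Set G))
    (hH : IsOpen (H : Set G)) : H.relIndex K * μ H = μ K := by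
  have := finite_quotient_addSubgroupOf_of_isCompact_of_isOpen hK hH
  have := Fintype.ofFinite (K ⧸ H.addSubgroupOf K)
  set r : K ⧸ H.addSubgroupOf K → G := fun q => (q.out : G)
  have mem_coset : ∀ q x, x ∈ r q +ᵥ (H : Set G) ↔
      ∃ hx : x ∈ K, ((⟨x, hx⟩ : K) : K ⧸ H.addSubgroupOf K) = q := by
    intro q x
    rw [mem_leftAddCoset_iff]
    constructor
    · intro h
      have hx : x ∈ K := by simpa [r] using K.add_mem q.out.2 (hHK h)
      exact ⟨hx, ((QuotientAddGroup.out_eq' q).symm.trans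
        (QuotientAddGroup.eq.mpr (by simpa [mem_addSubgroupOf] using h))).symm⟩
    · rintro ⟨hx, rfl⟩
      simpa [r, mem_addSubgroupOf] using QuotientAddGroup.eq.mp
        (QuotientAddGroup.out_eq' ((⟨x, hx⟩ : K) : K ⧸ H.addSubgroupOf K))
  have hK_eq : (K : Set G) = ⋃ q, r q +ᵥ (H : Set G) := by
    ext x
    simp only [Set.mem_iUnion, mem_coset]
    exact ⟨fun hx => ⟨_, hx, rfl⟩, fun ⟨_, hx, _⟩ => hx⟩
  have hdisj : Pairwise (Function.onFun Disjoint fun q => r q +ᵥ (H : Set G)) := by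
    intro q₁ q₂ hne
    refine Set.disjoint_left.mpr fun x h₁ h₂ => hne ?_
    obtain ⟨_, rfl⟩ := (mem_coset _ _).1 h₁
    obtain ⟨_, rfl⟩ := (mem_coset _ _).1 h₂
    rfl
  rw [hK_eq, measure_iUnion hdisj fun q => (hH.vadd _).measurableSet]
  simp only [measure_vadd, tsum_fintype, Finset.sum_const, Finset.card_univ, nsmul_eq_mul,
    relIndex, index, Nat.card_eq_fintype_card]

end AddSubgroup

theorem Submodule.sup_span_singleton_le_of_sub_mem {R M : Type*} [Ring R] [AddCommGroup M]
    [Module R M] {P : Submodule R M} {u w : M} (h : u - w ∈ P) :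
    P ⊔ span R {u} ≤ P ⊔ span R {w} := by
  refine sup_le le_sup_left ((span_singleton_le_iff_mem _ _).mpr ?_)
  rw [← sub_add_cancel u w]
  exact add_mem (mem_sup_left h) (mem_sup_right (mem_span_singleton_self w))

theorem Submodule.sup_span_singleton_eq_iff_sub_mem {R M N : Type*} [Ring R] [IsDomain R]
    [AddCommGroup M] [Module R M] [AddCommGroup N] [Module R N] [Module.IsTorsionFree R N]
    {P : Submodule R M} {φ : M →ₗ[R] N} (hP : P ≤ LinearMap.ker φ) {u w : M}
    (huw : φ u = φ w) (hw : φ w ≠ 0) :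
    P ⊔ span R {u} = P ⊔ span R {w} ↔ u - w ∈ P := by
  refine ⟨fun h => ?_, fun h => le_antisymm (sup_span_singleton_le_of_sub_mem h)
    (sup_span_singleton_le_of_sub_mem (by simpa using P.neg_mem h))⟩
  have hu : u ∈ P ⊔ span R {w} := h ▸ mem_sup_right (mem_span_singleton_self u)
  obtain ⟨r, hr, z, hz, hsum⟩ := mem_sup.mp hu
  obtain ⟨c, rfl⟩ := mem_span_singleton.mp hz
  have hc : c = 1 := by
    have hφ : c • φ w = (1 : R) • φ w := by
      simpa [LinearMap.mem_ker.mp (hP hr), huw] using congrArg φ hsum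
    exact (smul_left_injective R hw).eq_iff.mp hφ
  rw [← hsum, hc, one_smul, add_sub_cancel_right]
  exact hr

theorem setOf_isLeast_mem_zero {α : Type*} (A : ℕ → Set α) :
    {x | IsLeast {k | x ∈ A k} 0} = A 0 := by
  ext x
  exact ⟨fun h => h.1, fun h => ⟨h, fun k _ => k.zero_le⟩⟩

theorem setOf_isLeast_mem_succ {α : Type*} {A : ℕ → Set α} (hA : Monotone A) (n : ℕ) :
    {x | IsLeast {k | x ∈ A k} (n + 1)} = A (n + 1) \ A n := by
  ext x
  refine ⟨fun h => ⟨h.1, fun hn => by simpa using h.2 hn⟩, fun h => ⟨h.1, fun k hk => ?_⟩⟩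
  by_contra! hlt
  exact h.2 (hA (Nat.le_of_lt_succ hlt) hk)

theorem PadicInt.index_span_pow (p : ℕ) [Fact p.Prime] (k : ℕ) :
    (Ideal.span {(p : ℤ_[p]) ^ k}).toAddSubgroup.index = p ^ k := by
  rw [← PadicInt.ker_toZModPow]
  change (PadicInt.toZModPow k : ℤ_[p] →+* ZMod (p ^ k)).toAddMonoidHom.ker.index = _
  rw [AddSubgroup.index_ker, AddMonoidHom.range_eq_top_of_surjective _ (ZMod.ringHom_surjective _),
    AddSubgroup.card_top, Nat.card_zmod]

section Lattices

variable (p : ℕ) [Fact p.Prime] {n : ℕ}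

theorem mem_stdLat_iff {x : Fin n → ℚ_[p]} : x ∈ stdLat p n ↔ ∀ i, ‖x i‖ ≤ 1 := by
  simp only [stdLat, Submodule.mem_pi, Set.mem_univ, true_implies, Submodule.mem_one,
    PadicInt.algebraMap_apply]
  exact forall_congr' fun i => ⟨fun ⟨y, hy⟩ => hy ▸ y.2, fun h => ⟨⟨x i, h⟩, rfl⟩⟩

theorem coe_stdLat : (stdLat p n : Set (Fin n → ℚ_[p])) = Metric.closedBall 0 1 := by
  ext x
  simp [closedBall_pi _ zero_le_one, mem_stdLat_iff]

theorem isLattice_stdLat : IsLattice (stdLat p n) := by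
  rw [IsLattice, coe_stdLat]
  exact ⟨isCompact_closedBall 0 1, IsUltrametricDist.isOpen_closedBall 0 one_ne_zero⟩

variable (n) in
def coeLin : (Fin n → ℤ_[p]) →ₗ[ℤ_[p]] (Fin n → ℚ_[p]) :=
  (Algebra.linearMap ℤ_[p] ℚ_[p]).compLeft (Fin n)

theorem range_coeLin : LinearMap.range (coeLin p n) = stdLat p n := by
  ext x
  simp only [LinearMap.mem_range, mem_stdLat_iff, funext_iff]
  exact ⟨fun ⟨y, hy⟩ i => hy i ▸ (y i).2, fun h => ⟨fun i => ⟨x i, h i⟩, fun i => rfl⟩⟩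

variable (n) in
def smulPow (k : ℕ) : (Fin n → ℚ_[p]) →ₗ[ℤ_[p]] (Fin n → ℚ_[p]) :=
  ((LinearEquiv.smulOfNeZero ℚ_[p] (Fin n → ℚ_[p]) ((p : ℚ_[p]) ^ k)
    (pow_ne_zero _ (Nat.cast_ne_zero.mpr (Fact.out : p.Prime).ne_zero))).restrictScalars
      ℤ_[p]).toLinearMap

theorem smulPow_bijective (k : ℕ) : Function.Bijective (smulPow p n k) :=
  LinearEquiv.bijective (LinearEquiv.restrictScalars ℤ_[p] _)

theorem smulPow_apply (k : ℕ) (x : Fin n → ℚ_[p]) : smulPow p n k x = (p : ℚ_[p]) ^ k • x := rfl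

theorem smulPow_apply_eq_smul (k : ℕ) (x : Fin n → ℚ_[p]) :
    smulPow p n k x = ((p : ℤ_[p]) ^ k) • x := by
  rw [smulPow_apply, ← algebraMap_smul ℚ_[p], map_pow, map_natCast]
  rfl

theorem map_smulPow_le (k : ℕ) (L : Submodule ℤ_[p] (Fin n → ℚ_[p])) :
    L.map (smulPow p n k) ≤ L := by
  rintro _ ⟨x, hx, rfl⟩
  rw [smulPow_apply_eq_smul]
  exact L.smul_mem _ hx

theorem le_comap_smulPow (k : ℕ) (L : Submodule ℤ_[p] (Fin n → ℚ_[p])) :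
    L ≤ L.comap (smulPow p n k) :=
  Submodule.map_le_iff_le_comap.mp (map_smulPow_le p k L)

theorem monotone_comap_smulPow (L : Submodule ℤ_[p] (Fin n → ℚ_[p])) :
    Monotone fun k => L.comap (smulPow p n k) := by
  intro j k hjk x hx
  rw [Submodule.mem_comap, smulPow_apply, ← Nat.sub_add_cancel hjk, pow_add, mul_smul]
  exact map_smulPow_le p (k - j) L ⟨_, hx, rfl⟩

theorem comap_coeLin_map_smulPow_stdLat (k : ℕ) :
    ((stdLat p n).map (smulPow p n k)).toAddSubgroup.comap (coeLin p n).toAddMonoidHom =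
      AddSubgroup.pi Set.univ fun _ => (Ideal.span {(p : ℤ_[p]) ^ k}).toAddSubgroup := by
  ext x
  simp only [AddSubgroup.mem_comap, Submodule.mem_toAddSubgroup, Submodule.mem_map,
    AddSubgroup.mem_pi, Set.mem_univ, true_implies, Ideal.mem_span_singleton, funext_iff,
    smulPow_apply, Pi.smul_apply, smul_eq_mul]
  constructor
  · rintro ⟨y, hy, hyx⟩ i
    let z : ℤ_[p] := ⟨y i, (mem_stdLat_iff p).mp hy i⟩
    have hxz : (x i : ℚ_[p]) = ((p ^ k * z : ℤ_[p]) : ℚ_[p]) := by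
      push_cast
      simpa [coeLin] using (hyx i).symm
    exact ⟨z, PadicInt.ext hxz⟩
  · intro h
    choose c hc using h
    refine ⟨coeLin p n c, range_coeLin p ▸ LinearMap.mem_range_self _ c, fun i => ?_⟩
    simp [coeLin, hc]

theorem relIndex_map_smulPow_stdLat (k : ℕ) :
    ((stdLat p n).map (smulPow p n k)).toAddSubgroup.relIndex (stdLat p n).toAddSubgroup =
      p ^ (k * n) := by
  have hO : (stdLat p n).toAddSubgroup = (coeLin p n).toAddMonoidHom.range := by
    rw [← range_coeLin, LinearMap.range_toAddSubgroup]
  rw [hO, ← AddSubgroup.index_comap,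
    comap_coeLin_map_smulPow_stdLat, AddSubgroup.index_pi]
  simp [PadicInt.index_span_pow, pow_mul]

/-- Both `L` and `stdLat p n` contain `L ⊓ stdLat p n` with finite index, and scaling by `p^k`
has the same index in each of the three. -/
theorem relIndex_map_smulPow {L : Submodule ℤ_[p] (Fin n → ℚ_[p])} (hL : IsLattice L) (k : ℕ) :
    (L.map (smulPow p n k)).toAddSubgroup.relIndex L.toAddSubgroup = p ^ (k * n) := by
  have hO := isLattice_stdLat p (n := n)
  have hZ : IsOpen ((L ⊓ stdLat p n : Submodule ℤ_[p] (Fin n → ℚ_[p])) :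
      Set (Fin n → ℚ_[p])) := hL.2.inter hO.2
  have sandwich {X : Submodule ℤ_[p] (Fin n → ℚ_[p])} (hX : IsLattice X)
      (hZX : L ⊓ stdLat p n ≤ X) :
      (X.map (smulPow p n k)).toAddSubgroup.relIndex X.toAddSubgroup =
        ((L ⊓ stdLat p n).map (smulPow p n k)).toAddSubgroup.relIndex
          (L ⊓ stdLat p n).toAddSubgroup :=
    AddSubgroup.relIndex_map_self_eq_of_le
      (f := (smulPow p n k : (Fin n → ℚ_[p]) →+ (Fin n → ℚ_[p])))
      (smulPow_bijective p k).injective (Submodule.toAddSubgroup_mono hZX) (Submodule.toAddSubgroup_mono (map_smulPow_le p k X))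
      (Submodule.toAddSubgroup_mono (map_smulPow_le p k (L ⊓ stdLat p n)))
      (AddSubgroup.relIndex_ne_zero_of_isCompact_of_isOpen hX.1 hZ)
  rw [sandwich hL inf_le_left, ← sandwich hO inf_le_right, relIndex_map_smulPow_stdLat]

theorem relIndex_comap_smulPow {L : Submodule ℤ_[p] (Fin n → ℚ_[p])} (hL : IsLattice L) (k : ℕ) :
    L.toAddSubgroup.relIndex (L.comap (smulPow p n k)).toAddSubgroup = p ^ (k * n) := by
  have hinj : Function.Injective (smulPow p n k : (Fin n → ℚ_[p]) →+ (Fin n → ℚ_[p])) :=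
    (smulPow_bijective p k).injective
  rw [← AddSubgroup.relIndex_map_map_of_injective _ _ hinj,
    ← Submodule.map_toAddSubgroup, ← Submodule.map_toAddSubgroup,
    Submodule.map_comap_eq_of_surjective (smulPow_bijective p k).surjective,
    relIndex_map_smulPow p hL]

variable (n) in
/-- For `M = R' ∩ K^m` and `N = M + ℤ_p^m` these are the classes `v + R'` with `ν ≤ k`. -/
def cosetsScaledInto (M N : Submodule ℤ_[p] (Fin n → ℚ_[p])) (k : ℕ) :
    Set ((Fin n → ℚ_[p]) ⧸ M) :=
  (N.comap (smulPow p n k)).map M.mkQ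

theorem monotone_cosetsScaledInto (M N : Submodule ℤ_[p] (Fin n → ℚ_[p])) :
    Monotone (cosetsScaledInto p n M N) :=
  fun _ _ h => Submodule.map_mono (monotone_comap_smulPow p N h)

theorem mk_mem_cosetsScaledInto_iff {M N : Submodule ℤ_[p] (Fin n → ℚ_[p])} (hMN : M ≤ N)
    (k : ℕ) (y : Fin n → ℚ_[p]) :
    Submodule.Quotient.mk y ∈ cosetsScaledInto p n M N k ↔ (p : ℚ_[p]) ^ k • y ∈ N := by
  rw [cosetsScaledInto, SetLike.mem_coe, ← Submodule.mkQ_apply, ← Submodule.mem_comap,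
    Submodule.comap_map_mkQ, sup_eq_right.mpr (hMN.trans (le_comap_smulPow p k N))]
  rfl

theorem card_cosetsScaledInto {M N : Submodule ℤ_[p] (Fin n → ℚ_[p])} (hMN : M ≤ N)
    (hN : IsLattice N) (k : ℕ) :
    Nat.card (cosetsScaledInto p n M N k) =
      M.toAddSubgroup.relIndex N.toAddSubgroup * p ^ (k * n) := by
  have hker : M.mkQ.toAddMonoidHom.ker = M.toAddSubgroup := by
    rw [← LinearMap.ker_toAddSubgroup, Submodule.ker_mkQ]
  rw [← relIndex_comap_smulPow p hN k, AddSubgroup.relIndex_mul_relIndex _ _ _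
      (Submodule.toAddSubgroup_mono hMN) (Submodule.toAddSubgroup_mono (le_comap_smulPow p k N)),
    ← hker, AddSubgroup.relIndex_ker]
  rfl

variable {p} in
theorem IsLattice.sup {L L' : Submodule ℤ_[p] (Fin n → ℚ_[p])} (hL : IsLattice L)
    (hL' : IsLattice L') : IsLattice (L ⊔ L') :=
  ⟨Submodule.coe_sup L L' ▸ hL.1.add hL'.1, Submodule.isOpen_mono le_sup_left hL.2⟩

theorem relIndex_sup_stdLat_mul_measure (μ : Measure (Fin n → ℚ_[p])) [μ.IsAddLeftInvariant]
    {M : Submodule ℤ_[p] (Fin n → ℚ_[p])} (hM : IsLattice M) :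
    M.toAddSubgroup.relIndex (M ⊔ stdLat p n).toAddSubgroup * μ ↑(M ⊓ stdLat p n) =
      μ (stdLat p n) := by
  have hO := isLattice_stdLat p (n := n)
  rw [Submodule.sup_toAddSubgroup, AddSubgroup.relIndex_sup_left,
    ← AddSubgroup.inf_relIndex_right]
  exact AddSubgroup.relIndex_mul_measure μ inf_le_right hO.1 (hM.2.inter hO.2)

end Lattices

section Hyperplane

variable (p : ℕ) [Fact p.Prime] (m : ℕ)

/-- Written so that `restrictSet p m A = padLin p m ⁻¹' A` holds by definition. -/
def padLin : (Fin m → ℚ_[p]) →ₗ[ℤ_[p]] (Fin (m + 1) → ℚ_[p]) where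
  toFun y i := if h : (i : ℕ) < m then y ⟨i, h⟩ else 0
  map_add' x y := by funext i; by_cases h : (i : ℕ) < m <;> simp [h]
  map_smul' c x := by funext i; by_cases h : (i : ℕ) < m <;> simp [h]

variable {p m}

@[simp]
theorem padLin_castSucc (y : Fin m → ℚ_[p]) (j : Fin m) : padLin p m y j.castSucc = y j := by
  simp [padLin]

@[simp]
theorem padLin_last (y : Fin m → ℚ_[p]) : padLin p m y (Fin.last m) = 0 := by
  simp [padLin]

theorem padLin_smul (a : ℚ_[p]) (y : Fin m → ℚ_[p]) :
    padLin p m (a • y) = a • padLin p m y := by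
  funext i
  refine Fin.lastCases ?_ (fun j => ?_) i <;> simp

theorem padLin_injective : Function.Injective (padLin p m) :=
  fun y z h => funext fun j => by simpa using congrFun h j.castSucc

theorem continuous_padLin : Continuous (padLin p m) := by
  refine continuous_pi fun i => ?_
  by_cases h : (i : ℕ) < m
  · simpa [padLin, h] using continuous_apply (⟨i, h⟩ : Fin m)
  · simpa [padLin, h] using continuous_const

theorem range_padLin : LinearMap.range (padLin p m) = Kpred p m := by
  ext v
  simp only [LinearMap.mem_range, Kpred, LinearMap.mem_ker, LinearMap.proj_apply]
  refine ⟨fun ⟨y, hy⟩ => hy ▸ padLin_last y, fun hv => ⟨fun j => v j.castSucc, funext fun i => ?_⟩⟩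
  refine Fin.lastCases ?_ (fun j => ?_) i <;> simp [hv]

theorem padLin_mem_Kpred (y : Fin m → ℚ_[p]) : padLin p m y ∈ Kpred p m :=
  range_padLin (p := p) ▸ LinearMap.mem_range_self _ y

theorem comap_padLin_stdLat : (stdLat p (m + 1)).comap (padLin p m) = stdLat p m := by
  ext y
  simp [mem_stdLat_iff, Fin.forall_fin_succ']

theorem restrictSet_eq_comap_padLin (S : Submodule ℤ_[p] (Fin (m + 1) → ℚ_[p])) :
    restrictSet p m (S : Set (Fin (m + 1) → ℚ_[p])) = S.comap (padLin p m) :=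
  rfl

theorem IsLatticeWithin.isLattice_comap_padLin {R' : Submodule ℤ_[p] (Fin (m + 1) → ℚ_[p])}
    (hR' : IsLatticeWithin (Kpred p m) R') : IsLattice (R'.comap (padLin p m)) := by
  obtain ⟨-, hR'c, hR'o⟩ := hR'
  refine ⟨?_, hR'o.preimage (continuous_padLin.subtype_mk padLin_mem_Kpred)⟩
  refine (hR'c.image (f := fun v j => v (Fin.castSucc j)) (by fun_prop)).of_isClosed_subset
      (hR'c.isClosed.preimage continuous_padLin) fun y hy => ⟨_, hy, ?_⟩
  funext j
  simp

theorem map_padLin_sup_stdLat {R' : Submodule ℤ_[p] (Fin (m + 1) → ℚ_[p])} (hR' : R' ≤ Kpred p m) :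
    (R'.comap (padLin p m) ⊔ stdLat p m).map (padLin p m) =
      R' ⊔ (stdLat p (m + 1) ⊓ Kpred p m) := by
  rw [Submodule.map_sup, ← comap_padLin_stdLat, Submodule.map_comap_eq, Submodule.map_comap_eq,
    range_padLin, inf_eq_right.mpr hR', inf_comm]

end Hyperplane

section Extensions

variable {p m : ℕ} [Fact p.Prime] {R' : Submodule ℤ_[p] (Fin (m + 1) → ℚ_[p])}

theorem sup_span_genVec_padLin_eq_iff (hR' : R' ≤ Kpred p m) (ξ : ℤ) (y z : Fin m → ℚ_[p]) :
    R' ⊔ Submodule.span ℤ_[p] {genVec p m ξ (padLin p m y)} =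
        R' ⊔ Submodule.span ℤ_[p] {genVec p m ξ (padLin p m z)} ↔
      y - z ∈ R'.comap (padLin p m) := by
  have hlast : ∀ y, genVec p m ξ (padLin p m y) (Fin.last m) = (p : ℚ_[p]) ^ ξ := by
    simp [genVec]
  rw [Submodule.sup_span_singleton_eq_iff_sub_mem (φ := LinearMap.proj (Fin.last m)) hR'
    (by simp [hlast])
    (by simpa [hlast] using zpow_ne_zero ξ (Nat.cast_ne_zero.mpr (Fact.out : p.Prime).ne_zero))]
  simp [genVec, Submodule.mem_comap, map_sub]

theorem exists_injective_quotient_comap_padLin (hR' : R' ≤ Kpred p m) (ξ : ℤ) :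
    ∃ g : (Fin m → ℚ_[p]) ⧸ R'.comap (padLin p m) → Submodule ℤ_[p] (Fin (m + 1) → ℚ_[p]),
      Function.Injective g ∧ ∀ y, g (Submodule.Quotient.mk y) =
        R' ⊔ Submodule.span ℤ_[p] {genVec p m ξ (padLin p m y)} := by
  refine ⟨Quotient.lift (fun y => R' ⊔ Submodule.span ℤ_[p] {genVec p m ξ (padLin p m y)})
    fun y z h => (sup_span_genVec_padLin_eq_iff hR' ξ y z).mpr
      ((Submodule.quotientRel_def _).mp h), ?_, fun y => rfl⟩
  intro a b hab
  obtain ⟨y, rfl⟩ := Submodule.Quotient.mk_surjective _ a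
  obtain ⟨z, rfl⟩ := Submodule.Quotient.mk_surjective _ b
  exact (Submodule.Quotient.eq _).mpr ((sup_span_genVec_padLin_eq_iff hR' ξ y z).mp hab)

theorem smul_padLin_mem_iff (hR' : R' ≤ Kpred p m) (k : ℕ) (y : Fin m → ℚ_[p]) :
    (p : ℚ_[p]) ^ k • padLin p m y ∈ R' ⊔ (stdLat p (m + 1) ⊓ Kpred p m) ↔
      Submodule.Quotient.mk y ∈ cosetsScaledInto p m (R'.comap (padLin p m))
        (R'.comap (padLin p m) ⊔ stdLat p m) k := by
  rw [mk_mem_cosetsScaledInto_iff p le_sup_left, ← map_padLin_sup_stdLat hR', ← padLin_smul,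
    ← SetLike.mem_coe, Submodule.map_coe, padLin_injective.mem_set_image, SetLike.mem_coe]

theorem card_extensions_eq_card_quotient (hR' : R' ≤ Kpred p m) (ξ : ℤ) (ν : ℕ) :
    Nat.card {R : Submodule ℤ_[p] (Fin (m + 1) → ℚ_[p]) //
        ∃ v ∈ Kpred p m, R = R' ⊔ Submodule.span ℤ_[p] {genVec p m ξ v} ∧
          IsLeast {k : ℕ | (p : ℚ_[p]) ^ k • v ∈ R' ⊔ (stdLat p (m + 1) ⊓ Kpred p m)} ν} =
      Nat.card {x | IsLeast {k | x ∈ cosetsScaledInto p m (R'.comap (padLin p m))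
        (R'.comap (padLin p m) ⊔ stdLat p m) k} ν} := by
  obtain ⟨g, hg, hg_mk⟩ := exists_injective_quotient_comap_padLin hR' ξ
  rw [← Nat.card_image_of_injective hg]
  congr 2
  ext R
  simp only [Set.mem_ofPred_eq, Set.mem_image]
  constructor
  · rintro ⟨v, hv, rfl, hν⟩
    obtain ⟨y, rfl⟩ := LinearMap.mem_range.mp (range_padLin (p := p) ▸ hv)
    exact ⟨Submodule.Quotient.mk y, by simpa only [← smul_padLin_mem_iff hR'] using hν, hg_mk y⟩
  · rintro ⟨x, hx, rfl⟩
    obtain ⟨y, rfl⟩ := Submodule.Quotient.mk_surjective _ x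
    exact ⟨padLin p m y, padLin_mem_Kpred y, hg_mk y,
      by simpa only [smul_padLin_mem_iff hR'] using hx⟩

end Extensions

/-- The number of lattices `R ⊆ ℚ_p^{m+1}` with `R ∩ K^m = R'`, projection valuation `ξ`
and invariant `ν` is `1/vol(R' ∩ O^m)` if `ν = 0` and `p^{νm}(1 - p^{-m})/vol(R' ∩ O^m)`
if `ν > 0`; in particular it does not depend on `ξ`. -/
theorem card_lattices_over (p m : ℕ) [Fact p.Prime]
    (μ' : Measure (Fin m → ℚ_[p])) [μ'.IsAddLeftInvariant]
    (hμ' : μ' ↑(stdLat p m) = 1)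
    (R' : Submodule ℤ_[p] (Fin (m + 1) → ℚ_[p])) (hR' : IsLatticeWithin (Kpred p m) R')
    (ξ : ℤ) (ν : ℕ) :
    (Nat.card {R : Submodule ℤ_[p] (Fin (m + 1) → ℚ_[p]) //
        ∃ v ∈ Kpred p m, R = R' ⊔ Submodule.span ℤ_[p] {genVec p m ξ v} ∧
          IsLeast {k : ℕ | (p : ℚ_[p]) ^ k • v ∈
            R' ⊔ (stdLat p (m + 1) ⊓ Kpred p m)} ν} : ℝ)
      * (μ' (restrictSet p m ((R' ⊓ stdLat p (m + 1) :
          Submodule ℤ_[p] (Fin (m + 1) → ℚ_[p])) : Set (Fin (m + 1) → ℚ_[p])))).toReal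
      = if ν = 0 then 1 else (p : ℝ) ^ (ν * m) * (1 - (p : ℝ) ^ (-(m : ℤ))) := by
  rw [card_extensions_eq_card_quotient hR'.1, restrictSet_eq_comap_padLin, Submodule.comap_inf,
    comap_padLin_stdLat]
  set M := R'.comap (padLin p m)
  have hM : IsLattice M := hR'.isLattice_comap_padLin
  set A := cosetsScaledInto p m M (M ⊔ stdLat p m)
  set D := M.toAddSubgroup.relIndex (M ⊔ stdLat p m).toAddSubgroup
  have hA : Monotone A := monotone_cosetsScaledInto p _ _
  have hcard (k : ℕ) : Nat.card (A k) = D * p ^ (k * m) :=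
    card_cosetsScaledInto p le_sup_left (hM.sup (isLattice_stdLat p)) k
  have hvol : (D : ℝ) * (μ' ↑(M ⊓ stdLat p m)).toReal = 1 := by
    simpa [hμ'] using congrArg ENNReal.toReal (relIndex_sup_stdLat_mul_measure p μ' hM)
  rcases ν with _ | s
  · rw [setOf_isLeast_mem_zero, hcard, if_pos rfl]
    simpa using hvol
  · have hD : D ≠ 0 := by rintro h; simp [h] at hvol
    have hp := (Fact.out : p.Prime).pos
    have hfin : (A s).Finite := Nat.finite_of_card_ne_zero (by rw [hcard]; positivity)
    rw [setOf_isLeast_mem_succ hA, Nat.card_coe_set_eq, Set.ncard_sdiff (hA s.le_succ) hfin,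
      ← Nat.card_coe_set_eq, ← Nat.card_coe_set_eq, hcard, hcard, Nat.cast_sub (by gcongr; omega),
      if_neg s.succ_ne_zero, zpow_neg, zpow_natCast]
    push_cast [Nat.succ_eq_add_one, add_one_mul, pow_add]
    rw [eq_inv_of_mul_eq_one_right hvol]
    field_simp
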